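/- Let A, B be linear operators on a finite-dimensional complex Hilbert space with ‖A‖₁ ≤ 1 and ‖B‖₁ ≤ 1. If ‖αA − (1−α)B‖₁ = 1 for some α ∈ (0,1), then ‖λA − (1−λ)B‖₁ = 1 for all λ ∈ (0,1). -/

import Mathlib

open Matrix Kronecker BigOperators ComplexOrder

noncomputable section

/-- Square root of a positive semidefinite matrix (as in the older Mathlib). -/
noncomputable def Matrix.PosSemidef.sqrt {n 𝕜 : Type*} [Fintype n] [DecidableEq n] [RCLike 𝕜]
    {A : Matrix n n 𝕜} (hA : A.PosSemidef) : Matrix n n 𝕜 :=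
  (hA.1.eigenvectorUnitary : Matrix n n 𝕜) * diagonal ((↑) ∘ (√·) ∘ hA.1.eigenvalues) *
    (star hA.1.eigenvectorUnitary : Matrix n n 𝕜)

/-- Trace norm (sum of singular values) of a complex matrix. -/
noncomputable def traceNorm {l m : Type*} [Fintype l] [Fintype m] [DecidableEq m]
    (A : Matrix l m ℂ) : ℝ :=
  ((Matrix.posSemidef_conjTranspose_mul_self A).sqrt.trace).re

/-- Frobenius norm. -/
noncomputable def frobNorm {l m : Type*} [Fintype l] [Fintype m]
    (A : Matrix l m ℂ) : ℝ :=
  Real.sqrt ((Aᴴ * A).trace.re)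

/-- Partial transpose on the first tensor factor. -/
def ptranspose {a b : Type*} (X : Matrix (a × b) (a × b) ℂ) : Matrix (a × b) (a × b) ℂ :=
  Matrix.of fun p q => X (q.1, p.2) (p.1, q.2)

/-- Outer product `u v*`. -/
def outer {a : Type*} (u v : a → ℂ) : Matrix a a ℂ :=
  Matrix.of fun p q => u p * star (v q)

/-- Density operator: positive semidefinite with trace one. -/
def IsDensity {a : Type*} [Fintype a] (ρ : Matrix a a ℂ) : Prop :=
  ρ.PosSemidef ∧ ρ.trace = 1

/-- Maximally entangled unit vector in `ℂⁿ ⊗ ℂᵐ`. -/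
def MaxEntangled (n m : ℕ) (u : Fin n × Fin m → ℂ) : Prop :=
  ∃ (x : Fin (min n m) → EuclideanSpace ℂ (Fin n))
    (y : Fin (min n m) → EuclideanSpace ℂ (Fin m)),
    Orthonormal ℂ x ∧ Orthonormal ℂ y ∧
      ∀ p : Fin n × Fin m,
        u p = (1 / Real.sqrt (min n m) : ℝ) * ∑ i, x i p.1 * y i p.2

/-- Extension `Φ ⊗ I` of a matrix map to a system with ancilla `c`. -/
def tensorExt {a b c : Type*} [Fintype a] [DecidableEq a] [Fintype c]
    (Φ : Matrix a a ℂ →ₗ[ℂ] Matrix b b ℂ)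
    (X : Matrix (a × c) (a × c) ℂ) : Matrix (b × c) (b × c) ℂ :=
  Matrix.of fun p q => Φ (Matrix.of fun i j => X (i, p.2) (j, q.2)) p.1 q.1

/-- Quantum channel: completely positive and trace preserving. -/
def IsChannel {a b : Type*} [Fintype a] [DecidableEq a] [Fintype b]
    (Φ : Matrix a a ℂ →ₗ[ℂ] Matrix b b ℂ) : Prop :=
  (∀ X, (Φ X).trace = X.trace) ∧
    ∀ (k : ℕ) (X : Matrix (a × Fin k) (a × Fin k) ℂ),
      X.PosSemidef → (tensorExt Φ X).PosSemidef

/-- Partial trace over the second tensor factor. -/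
def ptraceRight {a b : Type*} [Fintype b] (M : Matrix (a × b) (a × b) ℂ) :
    Matrix a a ℂ :=
  Matrix.of fun i k => ∑ c, M (i, c) (k, c)

/-- Partial trace over the first tensor factor. -/
def ptraceLeft {a b : Type*} [Fintype a] (M : Matrix (a × b) (a × b) ℂ) :
    Matrix b b ℂ :=
  Matrix.of fun i k => ∑ c, M (c, i) (c, k)

/-- Canonical maximally entangled state `τ = (1/d) vec(I)vec(I)*` on `a ⊗ a`. -/
noncomputable def tauGen {a : Type*} [Fintype a] [DecidableEq a] :
    Matrix (a × a) (a × a) ℂ :=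
  Matrix.of fun p q =>
    (Fintype.card a : ℂ)⁻¹ * (if p.1 = p.2 then 1 else 0) * (if q.1 = q.2 then 1 else 0)

/-- The operator `τ ⊗ σ` on `a ⊗ (a ⊗ r)`. -/
noncomputable def tauSigma {a r : Type*} [Fintype a] [DecidableEq a]
    (σ : Matrix r r ℂ) : Matrix (a × (a × r)) (a × (a × r)) ℂ :=
  Matrix.of fun p q => tauGen (p.1, p.2.1) (q.1, q.2.1) * σ p.2.2 q.2.2

/-- Fidelity of two positive semidefinite matrices. -/
noncomputable def fidelity {a : Type*} [Fintype a] [DecidableEq a]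
    {P Q : Matrix a a ℂ} (hP : P.PosSemidef) (hQ : Q.PosSemidef) : ℝ :=
  traceNorm (hP.sqrt * hQ.sqrt)

/-!
The trace norm is dual to the operator norm: `‖X‖₁ = max Re tr (M X)` over contractions `M`,
the maximum being attained at `M = |X|⁺ Xᴴ`. Hence `‖·‖₁` is a seminorm, and
`f μ = ‖μ A - (1 - μ) B‖₁` is a convex function on `[0, 1]`, bounded there by
`μ ‖A‖₁ + (1 - μ) ‖B‖₁ ≤ 1`. A convex function on an interval that attains its maximum at an
interior point `α` is constant, so `f = f α = 1`.
-/

open Set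
open scoped InnerProductSpace MatrixOrder

theorem ConvexOn.eq_of_isMaxOn_of_mem_Ioo {𝕜 β : Type*} [Field 𝕜] [LinearOrder 𝕜]
    [IsStrictOrderedRing 𝕜] [AddCommMonoid β] [LinearOrder β] [IsOrderedCancelAddMonoid β]
    [Module 𝕜 β] [PosSMulStrictMono 𝕜 β] {f : 𝕜 → β} {a b x y : 𝕜}
    (hf : ConvexOn 𝕜 (Icc a b) f) (hx : x ∈ Ioo a b) (hmax : IsMaxOn f (Icc a b) x)
    (hy : y ∈ Icc a b) : f y = f x := by
  have ha : a ∈ Icc a b := left_mem_Icc.mpr (hx.1.trans hx.2).le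
  have hb : b ∈ Icc a b := right_mem_Icc.mpr (hx.1.trans hx.2).le
  refine le_antisymm (hmax hy) ?_
  rcases le_total y x with hyx | hxy
  · exact hf.le_left_of_right_le'' hy hb hyx hx.2 (hmax hb)
  · exact hf.le_right_of_left_le'' ha hy hx.1 hxy (hmax ha)

namespace Matrix

variable {l m : Type*} [Fintype l] [Fintype m] [DecidableEq m]

lemma trace_mul_eq_sum_inner (M : Matrix m l ℂ) (X : Matrix l m ℂ)
    (b : OrthonormalBasis m ℂ (EuclideanSpace ℂ m)) :
    (M * X).trace = ∑ i, ⟪toEuclideanLin Mᴴ (b i), toEuclideanLin X (b i)⟫_ℂ := by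
  classical
  rw [← trace_toLin_eq _ (PiLp.basisFun 2 ℂ m), ← toLpLin_eq_toLin,
    LinearMap.trace_eq_sum_inner _ b]
  refine Finset.sum_congr rfl fun i _ => ?_
  rw [toEuclideanLin_conjTranspose_eq_adjoint, LinearMap.adjoint_inner_left]
  simp [toLpLin_apply, mulVec_mulVec]

lemma norm_toEuclideanLin_sq (N : Matrix l m ℂ) (v : EuclideanSpace ℂ m) :
    ‖toEuclideanLin N v‖ ^ 2 = (star (WithLp.ofLp v) ⬝ᵥ ((Nᴴ * N) *ᵥ WithLp.ofLp v)).re := by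
  classical
  rw [← inner_self_eq_norm_sq (𝕜 := ℂ), ← LinearMap.adjoint_inner_right,
    ← toEuclideanLin_conjTranspose_eq_adjoint]
  simp [toLpLin_apply, mulVec_mulVec, EuclideanSpace.inner_eq_star_dotProduct, dotProduct_comm]

lemma norm_toEuclideanLin_conjTranspose_le {M : Matrix m l ℂ} (hM : M * Mᴴ ≤ 1)
    (v : EuclideanSpace ℂ m) : ‖toEuclideanLin Mᴴ v‖ ≤ ‖v‖ := by
  have hv : ‖v‖ ^ 2 = (star (WithLp.ofLp v) ⬝ᵥ WithLp.ofLp v).re := by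
    rw [← inner_self_eq_norm_sq (𝕜 := ℂ), EuclideanSpace.inner_eq_star_dotProduct,
      dotProduct_comm]
    rfl
  have h := (le_iff.mp hM).dotProduct_mulVec_nonneg (WithLp.ofLp v)
  rw [sub_mulVec, dotProduct_sub, one_mulVec] at h
  refine (pow_le_pow_iff_left₀ (norm_nonneg _) (norm_nonneg _) two_ne_zero).mp ?_
  rw [norm_toEuclideanLin_sq, conjTranspose_conjTranspose, hv, ← sub_nonneg, ← Complex.sub_re]
  exact (Complex.nonneg_iff.mp h).1

lemma traceNorm_eq_sum_sqrt_eigenvalues (X : Matrix l m ℂ) :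
    traceNorm X = ∑ i, √((isHermitian_conjTranspose_mul_self X).eigenvalues i) := by
  rw [traceNorm, PosSemidef.sqrt, trace_mul_cycle, Unitary.coe_star_mul_self, one_mul,
    trace_diagonal, Complex.re_sum]
  rfl

lemma norm_trace_mul_le_traceNorm {M : Matrix m l ℂ} (hM : M * Mᴴ ≤ 1)
    (X : Matrix l m ℂ) : ‖(M * X).trace‖ ≤ traceNorm X := by
  set hH := isHermitian_conjTranspose_mul_self X
  set w := hH.eigenvectorBasis
  have hXw (i : m) : ‖toEuclideanLin X (w i)‖ = √(hH.eigenvalues i) := by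
    rw [← Real.sqrt_sq (norm_nonneg _), norm_toEuclideanLin_sq, hH.eigenvalues_eq]
    rfl
  have hMw (i : m) : ‖toEuclideanLin Mᴴ (w i)‖ ≤ 1 :=
    (norm_toEuclideanLin_conjTranspose_le hM (w i)).trans_eq (w.orthonormal.1 i)
  calc ‖(M * X).trace‖
      ≤ ∑ i, ‖toEuclideanLin Mᴴ (w i)‖ * ‖toEuclideanLin X (w i)‖ := by
        rw [trace_mul_eq_sum_inner M X w]
        exact (norm_sum_le _ _).trans (Finset.sum_le_sum fun i _ => norm_inner_le_norm _ _)
    _ ≤ ∑ i, √(hH.eigenvalues i) := Finset.sum_le_sum fun i _ => by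
        rw [hXw]
        exact mul_le_of_le_one_left (Real.sqrt_nonneg _) (hMw i)
    _ = traceNorm X := (traceNorm_eq_sum_sqrt_eigenvalues X).symm

lemma traceNorm_eq_re_trace_cfc_sqrt (X : Matrix l m ℂ) :
    traceNorm X = (cfc Real.sqrt (Xᴴ * X)).trace.re := by
  rw [(isHermitian_conjTranspose_mul_self X).cfc_eq]
  rfl

lemma exists_mul_conjTranspose_le_one_and_re_trace_mul_eq_traceNorm (X : Matrix l m ℂ) :
    ∃ M : Matrix m l ℂ, M * Mᴴ ≤ 1 ∧ (M * X).trace.re = traceNorm X := by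
  -- `P` is the pseudo-inverse of `|X| = √(Xᴴ X)`, so that `P Xᴴ X = |X|`.
  set P := cfc (fun x => (√x)⁻¹) (Xᴴ * X)
  have hP : Pᴴ = P := (cfc_predicate _ _ : IsSelfAdjoint P)
  have hA : IsSelfAdjoint (Xᴴ * X) := (isHermitian_conjTranspose_mul_self X).isSelfAdjoint
  have hcont (f : ℝ → ℝ) : ContinuousOn f (spectrum ℝ (Xᴴ * X)) :=
    (finite_real_spectrum (A := Xᴴ * X)).continuousOn _
  have hPA : P * (Xᴴ * X) = cfc Real.sqrt (Xᴴ * X) := by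
    conv_lhs => rw [← cfc_id' ℝ (Xᴴ * X) hA]
    rw [← cfc_mul _ _ _ (hcont _) (hcont _)]
    -- `x / √x = √x` holds for every real `x`, as `√x = 0` for `x ≤ 0`.
    simp_rw [inv_mul_eq_div, Real.div_sqrt]
  refine ⟨P * Xᴴ, ?_, ?_⟩
  · have : 1 - P * Xᴴ * (P * Xᴴ)ᴴ = cfc (fun x => 1 - √x * (√x)⁻¹) (Xᴴ * X) := by
      rw [cfc_sub _ _ _ (hcont _) (hcont _), cfc_const_one ℝ (Xᴴ * X),
        cfc_mul _ _ _ (hcont _) (hcont _), ← hPA, conjTranspose_mul, conjTranspose_conjTranspose,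
        hP]
      simp only [Matrix.mul_assoc, P]
    rw [← sub_nonneg, this]
    refine cfc_nonneg fun x _ => sub_nonneg.mpr ?_
    rcases eq_or_ne (√x) 0 with hx | hx
    · simp [hx]
    · rw [mul_inv_cancel₀ hx]
  · rw [Matrix.mul_assoc, hPA, traceNorm_eq_re_trace_cfc_sqrt]

lemma traceNorm_zero : traceNorm (0 : Matrix l m ℂ) = 0 := by
  obtain ⟨M, -, hM⟩ := exists_mul_conjTranspose_le_one_and_re_trace_mul_eq_traceNorm
    (0 : Matrix l m ℂ)
  rw [← hM, Matrix.mul_zero, trace_zero, Complex.zero_re]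

lemma traceNorm_add_le (X Y : Matrix l m ℂ) : traceNorm (X + Y) ≤ traceNorm X + traceNorm Y := by
  obtain ⟨M, hM, hMXY⟩ := exists_mul_conjTranspose_le_one_and_re_trace_mul_eq_traceNorm
    (X + Y)
  calc traceNorm (X + Y) = (M * X).trace.re + (M * Y).trace.re := by
        rw [← hMXY, Matrix.mul_add, trace_add, Complex.add_re]
    _ ≤ traceNorm X + traceNorm Y :=
        add_le_add ((Complex.re_le_norm _).trans (norm_trace_mul_le_traceNorm hM X))
          ((Complex.re_le_norm _).trans (norm_trace_mul_le_traceNorm hM Y))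

lemma traceNorm_smul_le (c : ℂ) (X : Matrix l m ℂ) : traceNorm (c • X) ≤ ‖c‖ * traceNorm X := by
  obtain ⟨M, hM, hMcX⟩ := exists_mul_conjTranspose_le_one_and_re_trace_mul_eq_traceNorm
    (c • X)
  calc traceNorm (c • X) = (c * (M * X).trace).re := by
        rw [← hMcX, Matrix.mul_smul, trace_smul, smul_eq_mul]
    _ ≤ ‖c * (M * X).trace‖ := Complex.re_le_norm _
    _ ≤ ‖c‖ * traceNorm X := by
        rw [norm_mul]
        exact mul_le_mul_of_nonneg_left (norm_trace_mul_le_traceNorm hM X) (norm_nonneg c)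

variable (l m) in
def traceNormSeminorm : Seminorm ℂ (Matrix l m ℂ) :=
  Seminorm.ofSMulLE traceNorm traceNorm_zero traceNorm_add_le traceNorm_smul_le

@[simp]
lemma coe_traceNormSeminorm : ⇑(traceNormSeminorm l m) = traceNorm := rfl

lemma convexOn_traceNorm_smul_sub_smul (A B : Matrix l m ℂ) :
    ConvexOn ℝ univ fun μ : ℝ => traceNorm ((μ : ℂ) • A - ((1 - μ : ℝ) : ℂ) • B) := by
  have hpath : (fun μ : ℝ => traceNorm ((μ : ℂ) • A - ((1 - μ : ℝ) : ℂ) • B)) =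
      traceNormSeminorm l m ∘ AffineMap.lineMap (-B) A := by
    funext μ
    rw [Function.comp_apply, AffineMap.lineMap_apply_module, coe_traceNormSeminorm,
      Complex.coe_smul, Complex.coe_smul, smul_neg, neg_add_eq_sub]
  rw [hpath]
  exact (traceNormSeminorm l m).convexOn.comp_affineMap _

lemma traceNorm_smul_sub_smul_le (A B : Matrix l m ℂ) {μ : ℝ} (h₀ : 0 ≤ μ) (h₁ : μ ≤ 1) :
    traceNorm ((μ : ℂ) • A - ((1 - μ : ℝ) : ℂ) • B) ≤ μ * traceNorm A + (1 - μ) * traceNorm B := by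
  rw [← coe_traceNormSeminorm]
  refine (map_sub_le_add _ _ _).trans_eq ?_
  rw [map_smul_eq_mul, map_smul_eq_mul, Complex.norm_real, Complex.norm_real,
    Real.norm_of_nonneg h₀, Real.norm_of_nonneg (sub_nonneg.mpr h₁)]

end Matrix

/-- If `‖A‖₁ ≤ 1`, `‖B‖₁ ≤ 1` and `‖αA − (1−α)B‖₁ = 1` for some `α ∈ (0,1)`, then
`‖λA − (1−λ)B‖₁ = 1` for all `λ ∈ (0,1)`. -/
theorem stmt13 (n : ℕ) (A B : Matrix (Fin n) (Fin n) ℂ)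
    (hA : traceNorm A ≤ 1) (hB : traceNorm B ≤ 1)
    (α : ℝ) (hα : α ∈ Set.Ioo (0 : ℝ) 1)
    (h : traceNorm ((α : ℂ) • A - ((1 - α : ℝ) : ℂ) • B) = 1) :
    ∀ l ∈ Set.Ioo (0 : ℝ) 1,
      traceNorm ((l : ℂ) • A - ((1 - l : ℝ) : ℂ) • B) = 1 := by
  intro l hl
  have hle : ∀ μ ∈ Icc (0 : ℝ) 1, traceNorm ((μ : ℂ) • A - ((1 - μ : ℝ) : ℂ) • B) ≤ 1 :=
    fun μ ⟨h₀, h₁⟩ => (traceNorm_smul_sub_smul_le A B h₀ h₁).trans <| by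
      nlinarith [mul_le_mul_of_nonneg_left hA h₀, mul_le_mul_of_nonneg_left hB (sub_nonneg.mpr h₁)]
  have hmax :
      IsMaxOn (fun μ : ℝ => traceNorm ((μ : ℂ) • A - ((1 - μ : ℝ) : ℂ) • B)) (Icc 0 1) α :=
    fun μ hμ => (hle μ hμ).trans h.ge
  have hconv := (convexOn_traceNorm_smul_sub_smul A B).subset (subset_univ _) (convex_Icc 0 1)
  exact (hconv.eq_of_isMaxOn_of_mem_Ioo hα hmax (Ioo_subset_Icc_self hl)).trans h
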